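/- arXiv:2007.07548 — 2 statements merged into one kernel-verified Lean document; each statement's English description precedes it below -/
import Mathlib

section
/- Let 0 < α < 2, 0 < β < 2, and let μ be a positive (finite) Borel measure on [0,1). The following three statements are equivalent: (1) there exists a constant C > 0 such that ∑_{n≥0} (n+1)^{1-β} (μ[n])² |∑_{k=0}^{n} a_k|² ≤ C ∑_{n≥0} (n+1)^{1-α} |a_n|² for every complex sequence (a_n)_{n≥0} with ∑_{n≥0} (n+1)^{1-α} |a_n|² < ∞ (i.e., the generalized Cesàro operator C_μ is bounded from D_α into D_β); (2) μ is a [1 + (α-β)/2]-Carleson measure on [0,1); (3) there exists a constant C > 0 such that μ[n] ≤ C (n+1)^{-1-(α-β)/2} for all integers n ≥ 0. -/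
/-!
`(2) ⇔ (3)`: pairing `μ` with `t ^ n` is comparable to evaluating `μ [t, 1)` at `1 - t ≈ 1 / n`.
If `n (1 - t) ≤ 1/2` then `u ^ n ≥ 1/2` on `[t, 1)` by Bernoulli's inequality; conversely
`t ^ n ≤ e ^ (1 - j)` when `(n + 1) (1 - t) ∈ (j, j + 1]`, so slicing `[0, 1)` into these layers
bounds `μ[n]` by `(n + 1) ^ (-s) ∑ⱼ e ^ (1 - j) (j + 1) ^ s`.

`(3) ⇒ (1)`: Cauchy–Schwarz with the weights `(k + 1) ^ (± (1 - α/2))` gives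
`|∑_{k ≤ n} aₖ|² ≲ (n + 1) ^ (α/2) ∑_{k ≤ n} (k + 1) ^ (1 - α/2) |aₖ|²`; after exchanging the
two sums, the tail bound `∑_{n ≥ k} (n + 1) ^ (-1 - α/2) ≲ (k + 1) ^ (-α/2)` is a discrete Hardy
inequality.

`(1) ⇒ (3)`: test the inequality on `aₖ = (k + 1) ^ (α - 1)` for `k ≤ N`. Its partial sums are
`≍ (n + 1) ^ α`, its `D_α` norm squared is `≍ (N + 1) ^ α`, and `μ[n] ≥ μ[N]` for `n ≤ N`, so
`μ[N]² (N + 1) ^ (2 + 2α - β) ≲ (N + 1) ^ α`.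
-/

open MeasureTheory Finset Real

lemma rpow_eq_rpow_add_one_mul {x : ℝ} (hx : 0 ≤ x) (p : ℝ) :
    x ^ p = (x + 1) ^ p * (1 + -(x + 1)⁻¹) ^ p := by
  have hx1 : 0 < x + 1 := by positivity
  have hs : 0 ≤ 1 + -(x + 1)⁻¹ := by
    rw [← sub_eq_add_neg, sub_nonneg]
    exact inv_le_one_of_one_le₀ (by linarith)
  rw [← mul_rpow hx1.le hs]
  congr 1
  field_simp
  ring

lemma mul_rpow_sub_one_le_rpow_add_one_sub_rpow {p x : ℝ} (hp0 : 0 ≤ p) (hp1 : p ≤ 1)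
    (hx : 0 ≤ x) : p * (x + 1) ^ (p - 1) ≤ (x + 1) ^ p - x ^ p := by
  have hx1 : 0 < x + 1 := by positivity
  have hs : -1 ≤ -(x + 1)⁻¹ := neg_le_neg (inv_le_one_of_one_le₀ (by linarith))
  have := mul_le_mul_of_nonneg_left (rpow_one_add_le_one_add_mul_self hs hp0 hp1)
    (rpow_nonneg hx1.le p)
  rw [rpow_eq_rpow_add_one_mul hx p, rpow_sub_one hx1.ne']
  linarith [show (x + 1) ^ p * (1 + p * -(x + 1)⁻¹) = (x + 1) ^ p - p * ((x + 1) ^ p / (x + 1))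
    by ring]

lemma rpow_add_one_sub_rpow_le_mul_rpow_sub_one {p x : ℝ} (hp : 1 ≤ p) (hx : 0 ≤ x) :
    (x + 1) ^ p - x ^ p ≤ p * (x + 1) ^ (p - 1) := by
  have hx1 : 0 < x + 1 := by positivity
  have hs : -1 ≤ -(x + 1)⁻¹ := neg_le_neg (inv_le_one_of_one_le₀ (by linarith))
  have := mul_le_mul_of_nonneg_left (one_add_mul_self_le_rpow_one_add hs hp)
    (rpow_nonneg hx1.le p)
  rw [rpow_eq_rpow_add_one_mul hx p, rpow_sub_one hx1.ne']
  linarith [show (x + 1) ^ p * (1 + p * -(x + 1)⁻¹) = (x + 1) ^ p - p * ((x + 1) ^ p / (x + 1))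
    by ring]

lemma exists_rpow_add_one_sub_rpow_eq {x : ℝ} (hx : 0 < x) (p : ℝ) :
    ∃ ξ ∈ Set.Ioo x (x + 1), (x + 1) ^ p - x ^ p = p * ξ ^ (p - 1) := by
  obtain ⟨ξ, hξ, h⟩ := exists_hasDerivAt_eq_slope (fun y : ℝ => y ^ p)
    (fun y => p * y ^ (p - 1)) (lt_add_one x)
    (continuousOn_id.rpow_const fun y hy => Or.inl (by simp only [id]; linarith [hy.1]))
    fun y hy => hasDerivAt_rpow_const (Or.inl (by linarith [hy.1]))
  exact ⟨ξ, hξ, by simpa using h.symm⟩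

lemma sum_range_rpow_add_one_sub_rpow {p : ℝ} (hp : p ≠ 0) (M : ℕ) :
    ∑ k ∈ range M, (((k : ℝ) + 1) ^ p - (k : ℝ) ^ p) = (M : ℝ) ^ p := by
  have := sum_range_sub (fun k : ℕ => (k : ℝ) ^ p) M
  push_cast at this
  rw [this, zero_rpow hp, sub_zero]

lemma exists_sum_range_rpow_le {c : ℝ} (hc : -1 < c) :
    ∃ K > 0, ∀ M : ℕ, ∑ k ∈ range M, ((k : ℝ) + 1) ^ c ≤ K * (M : ℝ) ^ (c + 1) := by
  rcases le_total c 0 with hc0 | hc0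
  · refine ⟨(c + 1)⁻¹, inv_pos.mpr (by linarith), fun M => ?_⟩
    rw [← sum_range_rpow_add_one_sub_rpow (by linarith) M, mul_sum]
    refine sum_le_sum fun k _ => ?_
    rw [inv_mul_eq_div, le_div_iff₀' (by linarith)]
    simpa using mul_rpow_sub_one_le_rpow_add_one_sub_rpow (p := c + 1) (by linarith)
      (by linarith) (Nat.cast_nonneg (α := ℝ) k)
  · refine ⟨1, one_pos, fun M => ?_⟩
    calc ∑ k ∈ range M, ((k : ℝ) + 1) ^ c ≤ ∑ k ∈ range M, (M : ℝ) ^ c :=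
          sum_le_sum fun k hk => rpow_le_rpow (by positivity)
            (by exact_mod_cast mem_range.mp hk) hc0
      _ = 1 * (M : ℝ) ^ (c + 1) := by
          rcases M.eq_zero_or_pos with rfl | hM
          · simp [zero_rpow (by linarith : c + 1 ≠ 0)]
          · rw [sum_const, card_range, nsmul_eq_mul, rpow_add_one (by positivity)]
            ring

lemma exists_le_sum_range_rpow {c : ℝ} (hc : -1 < c) :
    ∃ K > 0, ∀ M : ℕ, K * (M : ℝ) ^ (c + 1) ≤ ∑ k ∈ range M, ((k : ℝ) + 1) ^ c := by
  rcases le_total 0 c with hc0 | hc0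
  · refine ⟨(c + 1)⁻¹, inv_pos.mpr (by linarith), fun M => ?_⟩
    rw [← sum_range_rpow_add_one_sub_rpow (by linarith) M, mul_sum]
    refine sum_le_sum fun k _ => ?_
    rw [inv_mul_eq_div, div_le_iff₀' (by linarith)]
    simpa using rpow_add_one_sub_rpow_le_mul_rpow_sub_one (p := c + 1) (by linarith)
      (Nat.cast_nonneg (α := ℝ) k)
  · refine ⟨1, one_pos, fun M => ?_⟩
    calc 1 * (M : ℝ) ^ (c + 1) = ∑ k ∈ range M, (M : ℝ) ^ c := by
          rcases M.eq_zero_or_pos with rfl | hM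
          · simp [zero_rpow (by linarith : c + 1 ≠ 0)]
          · rw [sum_const, card_range, nsmul_eq_mul, rpow_add_one (by positivity)]
            ring
      _ ≤ ∑ k ∈ range M, ((k : ℝ) + 1) ^ c :=
          sum_le_sum fun k hk => rpow_le_rpow_of_nonpos (by positivity)
            (by exact_mod_cast mem_range.mp hk) hc0

lemma exists_sum_Ico_rpow_le {c : ℝ} (hc : c < -1) :
    ∃ K > 0, ∀ k M : ℕ, ∑ n ∈ Ico k M, ((n : ℝ) + 1) ^ c ≤ K * ((k : ℝ) + 1) ^ (c + 1) := by
  set f : ℕ → ℝ := fun n => ((n : ℝ) + 1) ^ (c + 1)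
  set K := (2 : ℝ) ^ (-c) / (-(c + 1))
  have hK : 0 < K := div_pos (by positivity) (by linarith)
  have term : ∀ n : ℕ, ((n : ℝ) + 1) ^ c ≤ K * (f n - f (n + 1)) := by
    intro n
    have hx : (0 : ℝ) < n + 1 := by positivity
    obtain ⟨ξ, ⟨hξ1, hξ2⟩, h⟩ := exists_rpow_add_one_sub_rpow_eq hx (c + 1)
    have hξ : (2 : ℝ) ^ c * ((n : ℝ) + 1) ^ c ≤ ξ ^ c := by
      rw [← mul_rpow (by norm_num) hx.le]
      exact rpow_le_rpow_of_nonpos (by linarith) (by linarith) (by linarith)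
    have h2 : (2 : ℝ) ^ (-c) * 2 ^ c = 1 := by
      rw [← rpow_add (by norm_num), neg_add_cancel, rpow_zero]
    simp only [f, add_sub_cancel_right] at h ⊢
    push_cast
    rw [div_mul_eq_mul_div, le_div_iff₀ (by linarith)]
    calc ((n : ℝ) + 1) ^ c * -(c + 1)
        = 2 ^ (-c) * (-(c + 1)) * (2 ^ c * ((n : ℝ) + 1) ^ c) := by
          linear_combination (c + 1) * ((n : ℝ) + 1) ^ c * h2
      _ ≤ 2 ^ (-c) * (-(c + 1)) * ξ ^ c :=
          mul_le_mul_of_nonneg_left hξ (mul_nonneg (by positivity) (by linarith))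
      _ = _ := by linear_combination (2 : ℝ) ^ (-c) * h
  refine ⟨K, hK, fun k M => ?_⟩
  rcases le_total k M with hkM | hMk
  · calc ∑ n ∈ Ico k M, ((n : ℝ) + 1) ^ c ≤ ∑ n ∈ Ico k M, K * (f n - f (n + 1)) :=
          sum_le_sum fun n _ => term n
      _ = K * (f k - f M) := by
          rw [← mul_sum, ← neg_sub (f M), ← sum_Ico_sub f hkM, ← sum_neg_distrib]
          simp only [neg_sub]
      _ ≤ K * f k := by
          gcongr
          exact sub_le_self _ (by positivity)
  · rw [Ico_eq_empty_of_le hMk, sum_empty]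
    positivity

lemma summable_exp_one_sub_mul_rpow (s : ℝ) :
    Summable fun j : ℕ => exp (1 - j) * ((j : ℝ) + 1) ^ s := by
  have h := (summable_nat_add_iff 1).mpr (summable_pow_mul_exp_neg_nat_mul ⌈s⌉₊ one_pos)
  refine (h.mul_left (exp 2)).of_nonneg_of_le (fun j => by positivity) fun j => ?_
  push_cast
  calc exp (1 - j) * ((j : ℝ) + 1) ^ s ≤ exp (1 - j) * ((j : ℝ) + 1) ^ (⌈s⌉₊ : ℝ) := by
        gcongr
        · linarith [(Nat.cast_nonneg j : (0 : ℝ) ≤ j)]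
        · exact Nat.le_ceil s
    _ = exp 2 * (((j : ℝ) + 1) ^ ⌈s⌉₊ * exp (-1 * ((j : ℝ) + 1))) := by
        rw [rpow_natCast, mul_left_comm, ← exp_add, mul_comm]
        ring_nf

lemma sum_range_mul_sum_range_le {c w d : ℕ → ℝ} (hw : ∀ k, 0 ≤ w k)
    (hcd : ∀ k M, ∑ n ∈ Ico k M, c n ≤ d k) (M : ℕ) :
    ∑ n ∈ range M, c n * ∑ k ∈ range (n + 1), w k ≤ ∑ k ∈ range M, w k * d k :=
  calc ∑ n ∈ range M, c n * ∑ k ∈ range (n + 1), w k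
      = ∑ k ∈ range M, w k * ∑ n ∈ Ico k M, c n := by
        simp_rw [mul_sum, range_eq_Ico, sum_Ico_Ico_comm 0 M fun k n => w k * c n, mul_comm]
    _ ≤ ∑ k ∈ range M, w k * d k :=
        sum_le_sum fun k _ => mul_le_mul_of_nonneg_left (hcd k M) (hw k)

lemma norm_sum_sq_le_sum_rpow_mul_sum {E : Type*} [SeminormedAddCommGroup E] (a : ℕ → E)
    (θ : ℝ) (N : ℕ) :
    ‖∑ k ∈ range N, a k‖ ^ 2 ≤
      (∑ k ∈ range N, ((k : ℝ) + 1) ^ (-θ)) * ∑ k ∈ range N, ((k : ℝ) + 1) ^ θ * ‖a k‖ ^ 2 := by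
  refine (pow_le_pow_left₀ (norm_nonneg _) (norm_sum_le _ _) 2).trans <|
    sum_sq_le_sum_mul_sum_of_sq_le_mul _ (fun k _ => by positivity) (fun k _ => by positivity)
      fun k _ => ?_
  rw [← mul_assoc, ← rpow_add (by positivity), neg_add_cancel, rpow_zero, one_mul]

lemma le_sqrt_mul_rpow_neg_of_sq_mul_rpow_le {m x s K : ℝ} (hm : 0 ≤ m) (hx : 0 < x)
    (h : m ^ 2 * x ^ (2 * s) ≤ K) : m ≤ √K * x ^ (-s) := by
  have hsq : m ^ 2 ≤ K * (x ^ (-s)) ^ 2 := by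
    rw [← rpow_mul_natCast hx.le, show -s * ((2 : ℕ) : ℝ) = -(2 * s) by push_cast; ring,
      rpow_neg hx.le, ← div_eq_mul_inv, le_div_iff₀ (by positivity)]
    exact h
  rw [← sqrt_sq hm]
  calc √(m ^ 2) ≤ √(K * (x ^ (-s)) ^ 2) := sqrt_le_sqrt hsq
    _ = √K * x ^ (-s) := by rw [sqrt_mul' _ (sq_nonneg _), sqrt_sq (rpow_nonneg hx.le _)]

namespace GeneralizedCesaro

variable (μ : Measure ℝ)

/-- `μ[n]` -/
noncomputable def moment (n : ℕ) : ℝ := ∫ t in Set.Ico (0 : ℝ) 1, t ^ n ∂μ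

def IsCarleson (s : ℝ) : Prop :=
  ∃ C > (0 : ℝ), ∀ t ∈ Set.Ico (0 : ℝ) 1, (μ (Set.Ico t 1)).toReal ≤ C * (1 - t) ^ s

def HasMomentDecay (s : ℝ) : Prop :=
  ∃ C > (0 : ℝ), ∀ n : ℕ, moment μ n ≤ C * ((n : ℝ) + 1) ^ (-s)

/-- The `n`-th summand of `‖f‖²_{D_α}` for `f = ∑ aₙ zⁿ`. -/
noncomputable def dirichletTerm (α : ℝ) (a : ℕ → ℂ) (n : ℕ) : ℝ :=
  ((n : ℝ) + 1) ^ (1 - α) * ‖a n‖ ^ 2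

/-- The `n`-th summand of `‖C_μ f‖²_{D_β}` for `f = ∑ aₙ zⁿ`. -/
noncomputable def cesaroTerm (β : ℝ) (a : ℕ → ℂ) (n : ℕ) : ℝ :=
  ((n : ℝ) + 1) ^ (1 - β) * moment μ n ^ 2 * ‖∑ k ∈ range (n + 1), a k‖ ^ 2

def IsCesaroBounded (α β : ℝ) : Prop :=
  ∃ C > (0 : ℝ), ∀ a : ℕ → ℂ, Summable (dirichletTerm α a) →
    Summable (cesaroTerm μ β a) ∧ ∑' n, cesaroTerm μ β a n ≤ C * ∑' n, dirichletTerm α a n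

variable {μ}

lemma moment_nonneg (n : ℕ) : 0 ≤ moment μ n :=
  setIntegral_nonneg measurableSet_Ico fun _ ht => pow_nonneg ht.1 n

lemma cesaroTerm_nonneg (β : ℝ) (a : ℕ → ℂ) (n : ℕ) : 0 ≤ cesaroTerm μ β a n := by
  unfold cesaroTerm
  positivity

lemma integrableOn_pow_Ico [IsFiniteMeasure μ] (n : ℕ) :
    IntegrableOn (fun t : ℝ => t ^ n) (Set.Ico 0 1) μ :=
  (continuous_pow n).integrableOn_Icc.mono_set Set.Ico_subset_Icc_self

lemma moment_antitone [IsFiniteMeasure μ] : Antitone (moment μ) := fun _ _ hnm =>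
  setIntegral_mono_on (integrableOn_pow_Ico _) (integrableOn_pow_Ico _) measurableSet_Ico
    fun _ ht => pow_le_pow_of_le_one ht.1 ht.2.le hnm

lemma pow_mul_measure_Ico_le_moment [IsFiniteMeasure μ] {t : ℝ} (ht : 0 ≤ t) (n : ℕ) :
    t ^ n * (μ (Set.Ico t 1)).toReal ≤ moment μ n := by
  have hsub : Set.Ico t 1 ⊆ Set.Ico 0 1 := Set.Ico_subset_Ico ht le_rfl
  calc t ^ n * (μ (Set.Ico t 1)).toReal = ∫ _ in Set.Ico t 1, t ^ n ∂μ := by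
        rw [setIntegral_const, smul_eq_mul, mul_comm, measureReal_def]
    _ ≤ ∫ u in Set.Ico t 1, u ^ n ∂μ :=
        setIntegral_mono_on (integrableOn_const (measure_ne_top μ _))
          ((integrableOn_pow_Ico n).mono_set hsub) measurableSet_Ico
          fun u hu => pow_le_pow_left₀ ht hu.1 n
    _ ≤ moment μ n :=
        setIntegral_mono_set (integrableOn_pow_Ico n)
          (ae_restrict_of_forall_mem measurableSet_Ico fun u hu => pow_nonneg hu.1 n)
          hsub.eventuallyLE

lemma IsCarleson.of_hasMomentDecay [IsFiniteMeasure μ] {s : ℝ} (hs : 0 ≤ s)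
    (h : HasMomentDecay μ s) : IsCarleson μ s := by
  obtain ⟨C, hC, hmom⟩ := h
  refine ⟨2 ^ (s + 1) * C, by positivity, fun t ⟨ht0, ht1⟩ => ?_⟩
  have h2t : 0 < 2 * (1 - t) := by linarith
  set n := ⌊(2 * (1 - t))⁻¹⌋₊
  have hn : (n : ℝ) * (1 - t) ≤ 1 / 2 := by
    have := mul_le_mul_of_nonneg_right (Nat.floor_le (inv_nonneg.mpr h2t.le)) h2t.le
    rw [inv_mul_cancel₀ h2t.ne'] at this
    linarith
  have hpow : 1 / 2 ≤ t ^ n := by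
    have := one_add_mul_le_pow (a := t - 1) (by linarith) n
    rw [add_sub_cancel] at this
    linarith
  have hdecay : ((n : ℝ) + 1) ^ (-s) ≤ 2 ^ s * (1 - t) ^ s := by
    rw [← mul_rpow (by norm_num) (by linarith), ← inv_inv (2 * (1 - t)),
      inv_rpow (inv_nonneg.mpr h2t.le), ← rpow_neg (inv_nonneg.mpr h2t.le)]
    exact rpow_le_rpow_of_nonpos (inv_pos.mpr h2t) (Nat.lt_floor_add_one _).le (by linarith)
  calc (μ (Set.Ico t 1)).toReal ≤ 2 * (t ^ n * (μ (Set.Ico t 1)).toReal) := by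
        nlinarith [ENNReal.toReal_nonneg (a := μ (Set.Ico t 1))]
    _ ≤ 2 * (C * ((n : ℝ) + 1) ^ (-s)) := mul_le_mul_of_nonneg_left
        ((pow_mul_measure_Ico_le_moment ht0 n).trans (hmom n)) two_pos.le
    _ ≤ 2 * (C * (2 ^ s * (1 - t) ^ s)) := by gcongr
    _ = 2 ^ (s + 1) * C * (1 - t) ^ s := by rw [rpow_add_one (by norm_num)]; ring

lemma pow_le_sum_exp_mul_indicator {t : ℝ} (ht : t ∈ Set.Ico (0 : ℝ) 1) (n : ℕ) :
    t ^ n ≤ ∑ j ∈ range (n + 1),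
      exp (1 - j) * (Set.Ico (1 - ((j : ℝ) + 1) / (n + 1)) 1).indicator 1 t := by
  have hn : (0 : ℝ) < n + 1 := by positivity
  set x := ((n : ℝ) + 1) * (1 - t)
  have hx : 0 < x := mul_pos hn (by linarith [ht.2])
  obtain ⟨j, hj⟩ := Nat.exists_eq_add_one_of_ne_zero (Nat.ceil_pos.mpr hx).ne'
  have hjx : (j : ℝ) < x := by
    have := Nat.ceil_lt_add_one hx.le
    rw [hj] at this
    push_cast at this
    linarith
  have hxj : x ≤ j + 1 := by exact_mod_cast hj ▸ Nat.le_ceil x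
  have hjn : j ∈ range (n + 1) := by
    have : ⌈x⌉₊ ≤ n + 1 := Nat.ceil_le.mpr (by push_cast; nlinarith [ht.1])
    rw [mem_range]
    omega
  have hmem : t ∈ Set.Ico (1 - ((j : ℝ) + 1) / (n + 1)) 1 := by
    refine ⟨?_, ht.2⟩
    rw [sub_le_comm, le_div_iff₀ hn]
    linarith
  have hexp : t ^ n ≤ exp (1 - j) :=
    calc t ^ n ≤ exp (t - 1) ^ n :=
          pow_le_pow_left₀ ht.1 (by linarith [add_one_le_exp (t - 1)]) n
      _ = exp ((1 - t) - x) := by rw [← exp_nat_mul]; congr 1; simp only [x]; ring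
      _ ≤ exp (1 - j) := exp_le_exp.mpr (by linarith [ht.1])
  calc t ^ n ≤ exp (1 - j) * (Set.Ico (1 - ((j : ℝ) + 1) / (n + 1)) 1).indicator 1 t := by
        rwa [Set.indicator_of_mem hmem, Pi.one_apply, mul_one]
    _ ≤ _ := single_le_sum (f := fun j : ℕ =>
          exp (1 - j) * (Set.Ico (1 - ((j : ℝ) + 1) / (n + 1)) 1).indicator 1 t)
        (fun i _ => mul_nonneg (exp_pos _).le (Set.indicator_nonneg (fun _ _ => zero_le_one) t))
        hjn

lemma moment_le_sum_exp_mul_measure [IsFiniteMeasure μ] (n : ℕ) :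
    moment μ n ≤ ∑ j ∈ range (n + 1),
      exp (1 - j) * (μ (Set.Ico (1 - ((j : ℝ) + 1) / (n + 1)) 1)).toReal := by
  have hind (a : ℝ) :
      Integrable ((Set.Ico a 1).indicator (1 : ℝ → ℝ)) (μ.restrict (Set.Ico 0 1)) :=
    (integrable_const 1).indicator measurableSet_Ico
  calc moment μ n ≤ ∫ t in Set.Ico (0 : ℝ) 1, ∑ j ∈ range (n + 1),
        exp (1 - j) * (Set.Ico (1 - ((j : ℝ) + 1) / (n + 1)) 1).indicator 1 t ∂μ :=
        setIntegral_mono_on (integrableOn_pow_Ico n)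
          (integrable_finsetSum _ fun j _ => (hind _).const_mul _) measurableSet_Ico
          fun t ht => pow_le_sum_exp_mul_indicator ht n
    _ ≤ _ := by
        rw [integral_finsetSum _ fun j _ => (hind _).const_mul _]
        gcongr with j
        rw [integral_const_mul, integral_indicator_one measurableSet_Ico, measureReal_def,
          Measure.restrict_apply measurableSet_Ico]
        exact mul_le_mul_of_nonneg_left
          (ENNReal.toReal_mono (measure_ne_top μ _) (measure_mono Set.inter_subset_left))
          (exp_pos _).le

lemma HasMomentDecay.of_isCarleson [IsFiniteMeasure μ] {s : ℝ} (h : IsCarleson μ s) :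
    HasMomentDecay μ s := by
  obtain ⟨C, hC, hcar⟩ := h
  have hS := summable_exp_one_sub_mul_rpow s
  refine ⟨C * ∑' j : ℕ, exp (1 - j) * ((j : ℝ) + 1) ^ s,
    mul_pos hC (hS.tsum_pos (fun _ => by positivity) 0 (by positivity)), fun n => ?_⟩
  have hn : (0 : ℝ) < n + 1 := by positivity
  calc moment μ n
      ≤ ∑ j ∈ range (n + 1),
          exp (1 - j) * (μ (Set.Ico (1 - ((j : ℝ) + 1) / (n + 1)) 1)).toReal :=
        moment_le_sum_exp_mul_measure n
    _ ≤ ∑ j ∈ range (n + 1), exp (1 - j) * (C * (((j : ℝ) + 1) / (n + 1)) ^ s) := by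
        gcongr with j hj
        have hjn : (j : ℝ) + 1 ≤ n + 1 := by exact_mod_cast mem_range.mp hj
        have := hcar (1 - ((j : ℝ) + 1) / (n + 1))
          ⟨by rw [sub_nonneg, div_le_one hn]; exact hjn, by rw [sub_lt_self_iff]; positivity⟩
        rwa [sub_sub_cancel] at this
    _ = C * ((n : ℝ) + 1) ^ (-s) * ∑ j ∈ range (n + 1), exp (1 - j) * ((j : ℝ) + 1) ^ s := by
        rw [mul_sum]
        refine sum_congr rfl fun j _ => ?_
        rw [div_rpow (by positivity) hn.le, rpow_neg hn.le]
        ring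
    _ ≤ C * ((n : ℝ) + 1) ^ (-s) * ∑' j : ℕ, exp (1 - j) * ((j : ℝ) + 1) ^ s := by
        gcongr
        exact hS.sum_le_tsum _ fun _ _ => by positivity
    _ = _ := by ring

lemma isCarleson_iff_hasMomentDecay [IsFiniteMeasure μ] {s : ℝ} (hs : 0 ≤ s) :
    IsCarleson μ s ↔ HasMomentDecay μ s :=
  ⟨HasMomentDecay.of_isCarleson, IsCarleson.of_hasMomentDecay hs⟩

lemma cesaroTerm_le {α β C K : ℝ}
    (hmom : ∀ n : ℕ, moment μ n ≤ C * ((n : ℝ) + 1) ^ (-(1 + (α - β) / 2)))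
    (hK : ∀ n : ℕ,
      ∑ k ∈ range (n + 1), ((k : ℝ) + 1) ^ (α / 2 - 1) ≤ K * ((n : ℝ) + 1) ^ (α / 2))
    (a : ℕ → ℂ) (n : ℕ) :
    cesaroTerm μ β a n ≤ C ^ 2 * K * (((n : ℝ) + 1) ^ (-1 - α / 2) *
      ∑ k ∈ range (n + 1), ((k : ℝ) + 1) ^ (1 - α / 2) * ‖a k‖ ^ 2) := by
  have hx : (0 : ℝ) < n + 1 := by positivity
  set x : ℝ := n + 1
  set W := ∑ k ∈ range (n + 1), ((k : ℝ) + 1) ^ (1 - α / 2) * ‖a k‖ ^ 2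
  have hcs := norm_sum_sq_le_sum_rpow_mul_sum a (1 - α / 2) (n + 1)
  rw [neg_sub, sub_eq_add_neg, ← sub_eq_add_neg] at hcs
  have hexp :
      x ^ (1 - β) * (x ^ (-(1 + (α - β) / 2))) ^ 2 * x ^ (α / 2) = x ^ (-1 - α / 2) := by
    rw [← rpow_natCast, ← rpow_mul hx.le, ← rpow_add hx, ← rpow_add hx]
    congr 1
    push_cast
    ring
  calc cesaroTerm μ β a n
      ≤ x ^ (1 - β) * (C * x ^ (-(1 + (α - β) / 2))) ^ 2 * ((K * x ^ (α / 2)) * W) := by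
        unfold cesaroTerm
        gcongr
        · exact moment_nonneg n
        · exact hmom n
        · exact hcs.trans (by gcongr; exact hK n)
    _ = C ^ 2 * K * (x ^ (1 - β) * (x ^ (-(1 + (α - β) / 2))) ^ 2 * x ^ (α / 2) * W) := by
        ring
    _ = _ := by rw [hexp]

lemma IsCesaroBounded.of_hasMomentDecay {α β : ℝ} (hα : 0 < α)
    (h : HasMomentDecay μ (1 + (α - β) / 2)) : IsCesaroBounded μ α β := by
  obtain ⟨C, hC, hmom⟩ := h
  obtain ⟨K₁, hK₁, hsum⟩ := exists_sum_range_rpow_le (c := α / 2 - 1) (by linarith)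
  obtain ⟨K₂, hK₂, htail⟩ := exists_sum_Ico_rpow_le (c := -1 - α / 2) (by linarith)
  refine ⟨C ^ 2 * K₁ * K₂, by positivity, fun a ha => ?_⟩
  have hK₁' (n : ℕ) : ∑ k ∈ range (n + 1), ((k : ℝ) + 1) ^ (α / 2 - 1) ≤
      K₁ * ((n : ℝ) + 1) ^ (α / 2) := by
    simpa using hsum (n + 1)
  have hpartial (M : ℕ) :
      ∑ n ∈ range M, cesaroTerm μ β a n ≤ C ^ 2 * K₁ * K₂ * ∑' k, dirichletTerm α a k :=
    calc ∑ n ∈ range M, cesaroTerm μ β a n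
        ≤ ∑ n ∈ range M, C ^ 2 * K₁ * (((n : ℝ) + 1) ^ (-1 - α / 2) *
            ∑ k ∈ range (n + 1), ((k : ℝ) + 1) ^ (1 - α / 2) * ‖a k‖ ^ 2) :=
          sum_le_sum fun n _ => cesaroTerm_le hmom hK₁' a n
      _ ≤ C ^ 2 * K₁ * ∑ k ∈ range M, ((k : ℝ) + 1) ^ (1 - α / 2) * ‖a k‖ ^ 2 *
            (K₂ * ((k : ℝ) + 1) ^ (-1 - α / 2 + 1)) := by
          rw [← mul_sum]
          exact mul_le_mul_of_nonneg_left
            (sum_range_mul_sum_range_le (fun k => by positivity) htail M) (by positivity)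
      _ = C ^ 2 * K₁ * K₂ * ∑ k ∈ range M, dirichletTerm α a k := by
          simp only [mul_sum, dirichletTerm]
          refine sum_congr rfl fun k _ => ?_
          have e : ((k : ℝ) + 1) ^ (1 - α / 2) * ((k : ℝ) + 1) ^ (-1 - α / 2 + 1) =
              ((k : ℝ) + 1) ^ (1 - α) := by
            rw [← rpow_add (by positivity)]
            ring_nf
          linear_combination C ^ 2 * K₁ * K₂ * ‖a k‖ ^ 2 * e
      _ ≤ _ := by
          gcongr
          exact ha.sum_le_tsum _ fun k _ => by unfold dirichletTerm; positivity
  have hFs := summable_of_sum_range_le (cesaroTerm_nonneg β a) hpartial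
  exact ⟨hFs, hFs.tsum_le_of_sum_range_le hpartial⟩

noncomputable def truncatedPower (α : ℝ) (N k : ℕ) : ℂ :=
  if k ≤ N then ((((k : ℝ) + 1) ^ (α - 1) : ℝ) : ℂ) else 0

lemma hasSum_dirichletTerm_truncatedPower (α : ℝ) (N : ℕ) :
    HasSum (dirichletTerm α (truncatedPower α N))
      (∑ k ∈ range (N + 1), ((k : ℝ) + 1) ^ (α - 1)) := by
  have hterm : ∀ k ∈ range (N + 1),
      dirichletTerm α (truncatedPower α N) k = ((k : ℝ) + 1) ^ (α - 1) := by
    intro k hk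
    have hk1 : (0 : ℝ) < k + 1 := by positivity
    rw [dirichletTerm, truncatedPower, if_pos (Nat.lt_succ_iff.mp (mem_range.mp hk)),
      Complex.norm_real, norm_of_nonneg (rpow_nonneg hk1.le _), ← rpow_natCast,
      ← rpow_mul hk1.le, ← rpow_add hk1]
    ring_nf
  rw [← sum_congr rfl hterm]
  refine hasSum_sum_of_ne_finset_zero fun k hk => ?_
  rw [dirichletTerm, truncatedPower, if_neg (by simpa [Nat.lt_succ_iff] using hk)]
  simp

lemma norm_sum_range_truncatedPower {α : ℝ} {n N : ℕ} (hn : n ≤ N) :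
    ‖∑ k ∈ range (n + 1), truncatedPower α N k‖ =
      ∑ k ∈ range (n + 1), ((k : ℝ) + 1) ^ (α - 1) := by
  have hsum : ∑ k ∈ range (n + 1), truncatedPower α N k =
      ((∑ k ∈ range (n + 1), ((k : ℝ) + 1) ^ (α - 1) : ℝ) : ℂ) := by
    push_cast
    refine sum_congr rfl fun k hk => ?_
    rw [truncatedPower, if_pos (by have := mem_range.mp hk; omega)]
  rw [hsum, Complex.norm_real, norm_of_nonneg (sum_nonneg fun k _ => by positivity)]

lemma mul_rpow_le_tsum_cesaroTerm_truncatedPower [IsFiniteMeasure μ] {α β K₂ K₃ : ℝ} {N : ℕ}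
    (hK₂ : 0 ≤ K₂) (hsum : Summable (cesaroTerm μ β (truncatedPower α N)))
    (hlow : ∀ M : ℕ, K₂ * (M : ℝ) ^ (α - 1 + 1) ≤ ∑ k ∈ range M, ((k : ℝ) + 1) ^ (α - 1))
    (hlow' : ∀ M : ℕ, K₃ * (M : ℝ) ^ (1 - β + 2 * α + 1) ≤
      ∑ k ∈ range M, ((k : ℝ) + 1) ^ (1 - β + 2 * α)) :
    K₂ ^ 2 * K₃ * moment μ N ^ 2 * ((N : ℝ) + 1) ^ (2 + 2 * α - β) ≤
      ∑' n, cesaroTerm μ β (truncatedPower α N) n := by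
  have h3 : K₃ * ((N : ℝ) + 1) ^ (2 + 2 * α - β) ≤
      ∑ n ∈ range (N + 1), ((n : ℝ) + 1) ^ (1 - β + 2 * α) := by
    simpa [show 1 - β + 2 * α + 1 = 2 + 2 * α - β by ring] using hlow' (N + 1)
  calc K₂ ^ 2 * K₃ * moment μ N ^ 2 * ((N : ℝ) + 1) ^ (2 + 2 * α - β)
      ≤ K₂ ^ 2 * moment μ N ^ 2 * ∑ n ∈ range (N + 1), ((n : ℝ) + 1) ^ (1 - β + 2 * α) := by
        nlinarith [mul_le_mul_of_nonneg_left h3 (by positivity : 0 ≤ K₂ ^ 2 * moment μ N ^ 2)]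
    _ = ∑ n ∈ range (N + 1),
          ((n : ℝ) + 1) ^ (1 - β) * moment μ N ^ 2 * (K₂ * ((n : ℝ) + 1) ^ α) ^ 2 := by
        rw [mul_sum]
        refine sum_congr rfl fun n _ => ?_
        rw [rpow_add (by positivity), mul_comm 2 α, rpow_mul (by positivity)]
        norm_cast
        ring
    _ ≤ ∑ n ∈ range (N + 1), cesaroTerm μ β (truncatedPower α N) n := by
        refine sum_le_sum fun n hn => ?_
        have hnN : n ≤ N := Nat.lt_succ_iff.mp (mem_range.mp hn)
        unfold cesaroTerm
        gcongr
        · exact moment_nonneg N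
        · exact moment_antitone hnN
        · rw [norm_sum_range_truncatedPower hnN]
          simpa using hlow (n + 1)
    _ ≤ _ := hsum.sum_le_tsum _ fun n _ => cesaroTerm_nonneg β _ n

lemma HasMomentDecay.of_isCesaroBounded [IsFiniteMeasure μ] {α β : ℝ} (hα : 0 < α)
    (hβ : β < 2 + 2 * α) (h : IsCesaroBounded μ α β) : HasMomentDecay μ (1 + (α - β) / 2) := by
  obtain ⟨C, hC, hbdd⟩ := h
  obtain ⟨K₁, hK₁, hup⟩ := exists_sum_range_rpow_le (c := α - 1) (by linarith)
  obtain ⟨K₂, hK₂, hlow⟩ := exists_le_sum_range_rpow (c := α - 1) (by linarith)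
  obtain ⟨K₃, hK₃, hlow'⟩ := exists_le_sum_range_rpow (c := 1 - β + 2 * α) (by linarith)
  refine ⟨√(C * K₁ / (K₂ ^ 2 * K₃)), by positivity, fun N => ?_⟩
  have hx : (0 : ℝ) < N + 1 := by positivity
  have hnorm := hasSum_dirichletTerm_truncatedPower α N
  obtain ⟨hsum, hbound⟩ := hbdd _ hnorm.summable
  have hnorm_le : ∑' k, dirichletTerm α (truncatedPower α N) k ≤ K₁ * ((N : ℝ) + 1) ^ α := by
    simpa [hnorm.tsum_eq] using hup (N + 1)
  have hlower := mul_rpow_le_tsum_cesaroTerm_truncatedPower hK₂.le hsum hlow hlow'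
  refine le_sqrt_mul_rpow_neg_of_sq_mul_rpow_le (moment_nonneg N) hx ?_
  rw [le_div_iff₀ (by positivity)]
  refine le_of_mul_le_mul_right ?_ (rpow_pos_of_pos hx α)
  calc moment μ N ^ 2 * ((N : ℝ) + 1) ^ (2 * (1 + (α - β) / 2)) * (K₂ ^ 2 * K₃) *
        ((N : ℝ) + 1) ^ α
      = K₂ ^ 2 * K₃ * moment μ N ^ 2 * ((N : ℝ) + 1) ^ (2 + 2 * α - β) := by
        rw [show 2 + 2 * α - β = 2 * (1 + (α - β) / 2) + α by ring, rpow_add hx]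
        ring
    _ ≤ C * (K₁ * ((N : ℝ) + 1) ^ α) := hlower.trans (hbound.trans (by gcongr))
    _ = C * K₁ * ((N : ℝ) + 1) ^ α := by ring

lemma isCesaroBounded_iff_hasMomentDecay [IsFiniteMeasure μ] {α β : ℝ} (hα : 0 < α)
    (hβ : β < 2 + 2 * α) : IsCesaroBounded μ α β ↔ HasMomentDecay μ (1 + (α - β) / 2) :=
  ⟨HasMomentDecay.of_isCesaroBounded hα hβ, IsCesaroBounded.of_hasMomentDecay hα⟩

end GeneralizedCesaro

theorem generalized_cesaro_bounded_iff_general (α β : ℝ) (hα0 : 0 < α)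
    (hβ2 : β < 2)
    (μ : Measure ℝ) [IsFiniteMeasure μ] :
    ((∃ C > (0 : ℝ), ∀ a : ℕ → ℂ,
        Summable (fun n : ℕ => ((n : ℝ) + 1) ^ (1 - α) * ‖a n‖ ^ 2) →
        Summable (fun n : ℕ => ((n : ℝ) + 1) ^ (1 - β) *
          (∫ t in Set.Ico (0 : ℝ) 1, t ^ n ∂μ) ^ 2 * ‖∑ k ∈ Finset.range (n + 1), a k‖ ^ 2) ∧
        ∑' n : ℕ, ((n : ℝ) + 1) ^ (1 - β) *
            (∫ t in Set.Ico (0 : ℝ) 1, t ^ n ∂μ) ^ 2 * ‖∑ k ∈ Finset.range (n + 1), a k‖ ^ 2 ≤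
          C * ∑' n : ℕ, ((n : ℝ) + 1) ^ (1 - α) * ‖a n‖ ^ 2)
      ↔
      (∃ C > (0 : ℝ), ∀ t ∈ Set.Ico (0 : ℝ) 1,
        (μ (Set.Ico t 1)).toReal ≤ C * (1 - t) ^ (1 + (α - β) / 2)))
    ∧
    ((∃ C > (0 : ℝ), ∀ t ∈ Set.Ico (0 : ℝ) 1,
        (μ (Set.Ico t 1)).toReal ≤ C * (1 - t) ^ (1 + (α - β) / 2))
      ↔
      (∃ C > (0 : ℝ), ∀ n : ℕ,
        (∫ t in Set.Ico (0 : ℝ) 1, t ^ n ∂μ) ≤ C * ((n : ℝ) + 1) ^ (-(1 + (α - β) / 2)))) := by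
  have hcarleson := GeneralizedCesaro.isCarleson_iff_hasMomentDecay (μ := μ)
    (s := 1 + (α - β) / 2) (by linarith)
  exact ⟨(GeneralizedCesaro.isCesaroBounded_iff_hasMomentDecay hα0 (by linarith)).trans
    hcarleson.symm, hcarleson⟩

/-- For `0 < α, β < 2` and a finite positive Borel measure `μ` on `[0,1)`, the following are
equivalent: (1) the generalized Cesàro operator `C_μ` is bounded from `D_α` to `D_β`;
(2) `μ` is a `[1+(α-β)/2]`-Carleson measure on `[0,1)`;
(3) `μ[n] ≤ C (n+1)^{-1-(α-β)/2}` for all `n ≥ 0` and some `C > 0`. -/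
theorem generalized_cesaro_bounded_iff (α β : ℝ) (hα0 : 0 < α) (hα2 : α < 2)
    (hβ0 : 0 < β) (hβ2 : β < 2)
    (μ : Measure ℝ) [IsFiniteMeasure μ] (hμsupp : μ (Set.Ico (0 : ℝ) 1)ᶜ = 0) :
    ((∃ C > (0 : ℝ), ∀ a : ℕ → ℂ,
        Summable (fun n : ℕ => ((n : ℝ) + 1) ^ (1 - α) * ‖a n‖ ^ 2) →
        Summable (fun n : ℕ => ((n : ℝ) + 1) ^ (1 - β) *
          (∫ t in Set.Ico (0 : ℝ) 1, t ^ n ∂μ) ^ 2 * ‖∑ k ∈ Finset.range (n + 1), a k‖ ^ 2) ∧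
        ∑' n : ℕ, ((n : ℝ) + 1) ^ (1 - β) *
            (∫ t in Set.Ico (0 : ℝ) 1, t ^ n ∂μ) ^ 2 * ‖∑ k ∈ Finset.range (n + 1), a k‖ ^ 2 ≤
          C * ∑' n : ℕ, ((n : ℝ) + 1) ^ (1 - α) * ‖a n‖ ^ 2)
      ↔
      (∃ C > (0 : ℝ), ∀ t ∈ Set.Ico (0 : ℝ) 1,
        (μ (Set.Ico t 1)).toReal ≤ C * (1 - t) ^ (1 + (α - β) / 2)))
    ∧
    ((∃ C > (0 : ℝ), ∀ t ∈ Set.Ico (0 : ℝ) 1,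
        (μ (Set.Ico t 1)).toReal ≤ C * (1 - t) ^ (1 + (α - β) / 2))
      ↔
      (∃ C > (0 : ℝ), ∀ n : ℕ,
        (∫ t in Set.Ico (0 : ℝ) 1, t ^ n ∂μ) ≤ C * ((n : ℝ) + 1) ^ (-(1 + (α - β) / 2)))) :=
  generalized_cesaro_bounded_iff_general α β hα0 hβ2 μ
end

section
/- Let 0 < α < 2, 0 < β < 2, and let μ be a positive (finite) Borel measure on [0,1). Suppose there exists a constant C₅ > 0 such that μ[n] ≤ C₅ (n+1)^{-1-(α-β)/2} for all integers n ≥ 0. Then for every complex sequence (a_n)_{n≥0} with ∑_{n≥0} (n+1)^{1-α} |a_n|² < ∞, one has (∑_{n≥0} (n+1)^{1-β} (μ[n])² |∑_{k=0}^{n} a_k|²)^{1/2} ≤ C₅ (√(2(2+α))/α) (∑_{n≥0} (n+1)^{1-α} |a_n|²)^{1/2}; in particular C_μ is bounded from D_α into D_β. -/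
/-!
Bounding the moments by the hypothesis reduces the claim to the weighted Hardy inequality
`∑ (n+1)^(-1-α) ‖S n‖² ≤ 2(2+α)/α² ∑ (k+1)^(1-α) ‖a k‖²` for the partial sums `S n = ∑_{k ≤ n} a k`.
With `q = α/2`, Cauchy–Schwarz against the weights `(k+1)^(q-1)`, whose partial sums are at most
`(n+1)^q / q` by concavity of `x ↦ x^q`, gives `‖S n‖² ≤ (n+1)^q / q ∑_{k ≤ n} (k+1)^(1-q) ‖a k‖²`.
Exchanging the order of summation leaves the tails `∑_{n ≥ k} (n+1)^(-q-1) ≤ (1 + 1/q) (k+1)^(-q)`,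
which follow from convexity of `x ↦ x^(-q)` by telescoping.
-/

open MeasureTheory Finset

lemma mul_sub_le_sub_of_antitoneOn_deriv {f f' : ℝ → ℝ} {x y : ℝ} (hxy : x < y)
    (hf : ContinuousOn f (Set.Icc x y)) (hderiv : ∀ t ∈ Set.Ioo x y, HasDerivAt f (f' t) t)
    (hanti : AntitoneOn f' (Set.Ioc x y)) :
    f' y * (y - x) ≤ f y - f x := by
  obtain ⟨c, hc, hslope⟩ := exists_hasDerivAt_eq_slope f f' hxy hf hderiv
  have hle : f' y ≤ f' c := hanti ⟨hc.1, hc.2.le⟩ ⟨hxy, le_rfl⟩ hc.2.le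
  rwa [hslope, le_div_iff₀ (sub_pos.mpr hxy)] at hle

lemma mul_rpow_sub_one_le_rpow_sub_rpow {q x : ℝ} (hq0 : 0 ≤ q) (hq1 : q ≤ 1) (hx : 0 ≤ x) :
    q * (x + 1) ^ (q - 1) ≤ (x + 1) ^ q - x ^ q := by
  have h := mul_sub_le_sub_of_antitoneOn_deriv (f := fun t => t ^ q)
    (f' := fun t => q * t ^ (q - 1)) (lt_add_one x)
    (fun t _ => (Real.continuousAt_rpow_const t q (Or.inr hq0)).continuousWithinAt)
    (fun t ht => Real.hasDerivAt_rpow_const (Or.inl (hx.trans_lt ht.1).ne'))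
    (fun s hs t _ hst => mul_le_mul_of_nonneg_left
      (Real.rpow_le_rpow_of_nonpos (hx.trans_lt hs.1) hst (by linarith)) hq0)
  simpa using h

lemma mul_rpow_neg_sub_one_le_rpow_neg_sub {q x : ℝ} (hq : 0 ≤ q) (hx : 0 < x) :
    q * (x + 1) ^ (-q - 1) ≤ x ^ (-q) - (x + 1) ^ (-q) := by
  have hpos : ∀ t ∈ Set.Icc x (x + 1), t ≠ 0 := fun t ht => (hx.trans_le ht.1).ne'
  have h := mul_sub_le_sub_of_antitoneOn_deriv (f := fun t => -t ^ (-q))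
    (f' := fun t => q * t ^ (-q - 1)) (lt_add_one x)
    (fun t ht => (Real.continuousAt_rpow_const t _ (Or.inl (hpos t ht))).neg.continuousWithinAt)
    (fun t ht => (Real.hasDerivAt_rpow_const (p := -q)
      (Or.inl (hpos t (Set.Ioo_subset_Icc_self ht)))).neg.congr_deriv (by ring))
    (fun s hs t _ hst => mul_le_mul_of_nonneg_left
      (Real.rpow_le_rpow_of_nonpos (hx.trans hs.1) hst (by linarith)) hq)
  simp only [add_sub_cancel_left, mul_one] at h
  linarith

lemma sum_range_rpow_sub_one_le {q : ℝ} (hq0 : 0 < q) (hq1 : q ≤ 1) (n : ℕ) :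
    ∑ k ∈ range n, ((k : ℝ) + 1) ^ (q - 1) ≤ (n : ℝ) ^ q / q := by
  rw [le_div_iff₀ hq0, sum_mul]
  calc ∑ k ∈ range n, ((k : ℝ) + 1) ^ (q - 1) * q
      ≤ ∑ k ∈ range n, (((k + 1 : ℕ) : ℝ) ^ q - (k : ℝ) ^ q) := by
        refine sum_le_sum fun k _ => ?_
        push_cast
        linarith [mul_rpow_sub_one_le_rpow_sub_rpow hq0.le hq1 k.cast_nonneg]
    _ = (n : ℝ) ^ q := by
        rw [sum_range_sub (fun k : ℕ => (k : ℝ) ^ q), Nat.cast_zero, Real.zero_rpow hq0.ne',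
          sub_zero]

lemma mul_sum_Ico_rpow_neg_sub_one_le {q : ℝ} (hq : 0 ≤ q) {k : ℕ} (hk : 0 < k) {N : ℕ}
    (hkN : k ≤ N) :
    q * ∑ n ∈ Ico k N, ((n : ℝ) + 1) ^ (-q - 1) ≤ (k : ℝ) ^ (-q) - (N : ℝ) ^ (-q) := by
  induction N, hkN using Nat.le_induction with
  | base => simp
  | succ N hkN ih =>
    have hstep := mul_rpow_neg_sub_one_le_rpow_neg_sub hq (x := N)
      (Nat.cast_pos.mpr (hk.trans_le hkN))
    rw [sum_Ico_succ_top hkN, mul_add]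
    push_cast
    linarith

lemma sum_Ico_rpow_neg_sub_one_le {q : ℝ} (hq : 0 < q) (k N : ℕ) :
    ∑ n ∈ Ico k N, ((n : ℝ) + 1) ^ (-q - 1) ≤ (1 + 1 / q) * ((k : ℝ) + 1) ^ (-q) := by
  rcases le_or_gt N k with hNk | hkN
  · rw [Ico_eq_empty_of_le hNk, sum_empty]
    positivity
  -- the first term is split off because the telescoping bound needs a positive left endpoint
  have hhead : ((k : ℝ) + 1) ^ (-q - 1) ≤ ((k : ℝ) + 1) ^ (-q) :=
    Real.rpow_le_rpow_of_exponent_le (by linarith [k.cast_nonneg (α := ℝ)]) (by linarith)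
  have htail := mul_sum_Ico_rpow_neg_sub_one_le hq.le k.succ_pos hkN
  have hN : (0 : ℝ) ≤ (N : ℝ) ^ (-q) := by positivity
  have htail' : ∑ n ∈ Ico (k + 1) N, ((n : ℝ) + 1) ^ (-q - 1) ≤ 1 / q * ((k : ℝ) + 1) ^ (-q) := by
    rw [one_div_mul_eq_div, le_div_iff₀ hq, mul_comm]
    push_cast at htail
    linarith
  rw [sum_eq_sum_Ico_succ_bot hkN, add_mul, one_mul]
  exact add_le_add hhead htail'

lemma norm_sum_sq_le_sum_mul_sum_sq_div {ι E : Type*} [SeminormedAddCommGroup E] (s : Finset ι)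
    (a : ι → E) {w : ι → ℝ} (hw : ∀ i ∈ s, 0 < w i) :
    ‖∑ i ∈ s, a i‖ ^ 2 ≤ (∑ i ∈ s, w i) * ∑ i ∈ s, ‖a i‖ ^ 2 / w i := by
  calc ‖∑ i ∈ s, a i‖ ^ 2 ≤ (∑ i ∈ s, ‖a i‖) ^ 2 := by gcongr; exact norm_sum_le s a
    _ ≤ _ := sum_sq_le_sum_mul_sum_of_sq_le_mul s (fun i hi => (hw i hi).le)
        (fun i hi => div_nonneg (sq_nonneg _) (hw i hi).le)
        (fun i hi => by rw [mul_div_cancel₀ _ (hw i hi).ne'])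

lemma norm_sum_range_sq_le {E : Type*} [SeminormedAddCommGroup E] {q : ℝ} (hq0 : 0 < q)
    (hq1 : q ≤ 1) (a : ℕ → E) (n : ℕ) :
    ‖∑ k ∈ range n, a k‖ ^ 2 ≤
      (n : ℝ) ^ q / q * ∑ k ∈ range n, ((k : ℝ) + 1) ^ (1 - q) * ‖a k‖ ^ 2 := by
  have hw : ∀ k ∈ range n, 0 < ((k : ℝ) + 1) ^ (q - 1) := fun k _ => by positivity
  calc ‖∑ k ∈ range n, a k‖ ^ 2
      ≤ (∑ k ∈ range n, ((k : ℝ) + 1) ^ (q - 1)) *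
          ∑ k ∈ range n, ‖a k‖ ^ 2 / ((k : ℝ) + 1) ^ (q - 1) :=
        norm_sum_sq_le_sum_mul_sum_sq_div _ a hw
    _ = (∑ k ∈ range n, ((k : ℝ) + 1) ^ (q - 1)) *
          ∑ k ∈ range n, ((k : ℝ) + 1) ^ (1 - q) * ‖a k‖ ^ 2 := by
        congr 1
        refine sum_congr rfl fun k _ => ?_
        rw [div_eq_inv_mul, ← Real.rpow_neg (by positivity), neg_sub]
    _ ≤ _ := by
        gcongr
        exact sum_range_rpow_sub_one_le hq0 hq1 n

lemma sum_range_rpow_mul_norm_partialSum_sq_le {E : Type*} [SeminormedAddCommGroup E] {α : ℝ}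
    (hα0 : 0 < α) (hα2 : α ≤ 2) (a : ℕ → E) (N : ℕ) :
    ∑ n ∈ range N, ((n : ℝ) + 1) ^ (-1 - α) * ‖∑ k ∈ range (n + 1), a k‖ ^ 2 ≤
      2 * (2 + α) / α ^ 2 * ∑ k ∈ range N, ((k : ℝ) + 1) ^ (1 - α) * ‖a k‖ ^ 2 := by
  set q := α / 2 with hq
  have hq0 : 0 < q := by positivity
  set g : ℕ → ℕ → ℝ := fun n k => ((n : ℝ) + 1) ^ (-q - 1) * (((k : ℝ) + 1) ^ (1 - q) * ‖a k‖ ^ 2)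
  have hrow : ∀ n : ℕ, ((n : ℝ) + 1) ^ (-1 - α) * ‖∑ k ∈ range (n + 1), a k‖ ^ 2 ≤
      1 / q * ∑ k ∈ range (n + 1), g n k := by
    intro n
    have hpos : (0 : ℝ) < n + 1 := by positivity
    calc ((n : ℝ) + 1) ^ (-1 - α) * ‖∑ k ∈ range (n + 1), a k‖ ^ 2
        ≤ ((n : ℝ) + 1) ^ (-1 - α) * (((n : ℝ) + 1) ^ q / q *
            ∑ k ∈ range (n + 1), ((k : ℝ) + 1) ^ (1 - q) * ‖a k‖ ^ 2) := by
          gcongr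
          exact_mod_cast norm_sum_range_sq_le hq0 (by linarith) a (n + 1)
      _ = 1 / q * ∑ k ∈ range (n + 1), g n k := by
          rw [← mul_sum, show -q - 1 = -1 - α + q by rw [hq]; ring, Real.rpow_add hpos]
          ring
  have hcol : ∀ k : ℕ,
      ∑ n ∈ Ico k N, g n k ≤ (1 + 1 / q) * (((k : ℝ) + 1) ^ (1 - α) * ‖a k‖ ^ 2) := by
    intro k
    have hpos : (0 : ℝ) < k + 1 := by positivity
    calc ∑ n ∈ Ico k N, g n k
        = (∑ n ∈ Ico k N, ((n : ℝ) + 1) ^ (-q - 1)) * (((k : ℝ) + 1) ^ (1 - q) * ‖a k‖ ^ 2) :=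
          (sum_mul ..).symm
      _ ≤ (1 + 1 / q) * ((k : ℝ) + 1) ^ (-q) * (((k : ℝ) + 1) ^ (1 - q) * ‖a k‖ ^ 2) := by
          gcongr
          exact sum_Ico_rpow_neg_sub_one_le hq0 k N
      _ = (1 + 1 / q) * (((k : ℝ) + 1) ^ (1 - α) * ‖a k‖ ^ 2) := by
          rw [mul_assoc, ← mul_assoc (_ ^ (-q)), ← Real.rpow_add hpos,
            show -q + (1 - q) = 1 - α by rw [hq]; ring]
  calc ∑ n ∈ range N, ((n : ℝ) + 1) ^ (-1 - α) * ‖∑ k ∈ range (n + 1), a k‖ ^ 2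
      ≤ 1 / q * ∑ n ∈ range N, ∑ k ∈ range (n + 1), g n k := by
        rw [mul_sum]
        exact sum_le_sum fun n _ => hrow n
    _ = 1 / q * ∑ k ∈ range N, ∑ n ∈ Ico k N, g n k := by
        simp only [range_eq_Ico]
        rw [sum_Ico_Ico_comm 0 N fun k n => g n k]
    _ ≤ 1 / q * ∑ k ∈ range N, (1 + 1 / q) * (((k : ℝ) + 1) ^ (1 - α) * ‖a k‖ ^ 2) := by
        gcongr with k
        exact hcol k
    _ = 2 * (2 + α) / α ^ 2 * ∑ k ∈ range N, ((k : ℝ) + 1) ^ (1 - α) * ‖a k‖ ^ 2 := by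
        rw [← mul_sum, ← mul_assoc, hq]
        field_simp
        ring

lemma rpow_mul_sq_le_of_le_mul_rpow {x m C α β : ℝ} (hx : 0 < x) (hm0 : 0 ≤ m)
    (hm : m ≤ C * x ^ (-(1 + (α - β) / 2))) :
    x ^ (1 - β) * m ^ 2 ≤ C ^ 2 * x ^ (-1 - α) := by
  calc x ^ (1 - β) * m ^ 2 ≤ x ^ (1 - β) * (C * x ^ (-(1 + (α - β) / 2))) ^ 2 := by gcongr
    _ = C ^ 2 * (x ^ (1 - β) * x ^ (-(1 + (α - β) / 2)) * x ^ (-(1 + (α - β) / 2))) := by ring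
    _ = C ^ 2 * x ^ (-1 - α) := by
        rw [← Real.rpow_add hx, ← Real.rpow_add hx]
        ring_nf

lemma sum_range_rpow_mul_sq_mul_norm_partialSum_sq_le {E : Type*} [SeminormedAddCommGroup E]
    {α β C : ℝ} (hα0 : 0 < α) (hα2 : α ≤ 2) {m : ℕ → ℝ} (hm0 : ∀ n, 0 ≤ m n)
    (hm : ∀ n : ℕ, m n ≤ C * ((n : ℝ) + 1) ^ (-(1 + (α - β) / 2))) {a : ℕ → E}
    (ha : Summable fun n : ℕ => ((n : ℝ) + 1) ^ (1 - α) * ‖a n‖ ^ 2) (N : ℕ) :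
    ∑ n ∈ range N, ((n : ℝ) + 1) ^ (1 - β) * m n ^ 2 * ‖∑ k ∈ range (n + 1), a k‖ ^ 2 ≤
      C ^ 2 * (2 * (2 + α) / α ^ 2) * ∑' n : ℕ, ((n : ℝ) + 1) ^ (1 - α) * ‖a n‖ ^ 2 := by
  calc _ ≤ ∑ n ∈ range N,
          C ^ 2 * (((n : ℝ) + 1) ^ (-1 - α) * ‖∑ k ∈ range (n + 1), a k‖ ^ 2) := by
        refine sum_le_sum fun n _ => ?_
        rw [← mul_assoc]
        exact mul_le_mul_of_nonneg_right
          (rpow_mul_sq_le_of_le_mul_rpow (by positivity) (hm0 n) (hm n)) (by positivity)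
    _ ≤ C ^ 2 * (2 * (2 + α) / α ^ 2 *
          ∑ k ∈ range N, ((k : ℝ) + 1) ^ (1 - α) * ‖a k‖ ^ 2) := by
        rw [← mul_sum]
        gcongr
        exact sum_range_rpow_mul_norm_partialSum_sq_le hα0 hα2 a N
    _ ≤ _ := by
        rw [← mul_assoc]
        gcongr
        exact ha.sum_le_tsum _ fun k _ => by positivity

theorem moment_decay_implies_bounded_general (α β : ℝ) (hα0 : 0 < α) (hα2 : α < 2)
    (μ : Measure ℝ)
    (C₅ : ℝ) (hC₅ : 0 < C₅)
    (hmom : ∀ n : ℕ,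
      (∫ t in Set.Ico (0 : ℝ) 1, t ^ n ∂μ) ≤ C₅ * ((n : ℝ) + 1) ^ (-(1 + (α - β) / 2)))
    (a : ℕ → ℂ)
    (ha : Summable fun n : ℕ => ((n : ℝ) + 1) ^ (1 - α) * ‖a n‖ ^ 2) :
    Summable (fun n : ℕ => ((n : ℝ) + 1) ^ (1 - β) *
      (∫ t in Set.Ico (0 : ℝ) 1, t ^ n ∂μ) ^ 2 * ‖∑ k ∈ Finset.range (n + 1), a k‖ ^ 2) ∧
    (∑' n : ℕ, ((n : ℝ) + 1) ^ (1 - β) *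
        (∫ t in Set.Ico (0 : ℝ) 1, t ^ n ∂μ) ^ 2 *
        ‖∑ k ∈ Finset.range (n + 1), a k‖ ^ 2) ^ ((1 : ℝ) / 2) ≤
      C₅ * (Real.sqrt (2 * (2 + α)) / α) *
        (∑' n : ℕ, ((n : ℝ) + 1) ^ (1 - α) * ‖a n‖ ^ 2) ^ ((1 : ℝ) / 2) := by
  have hmoment : ∀ n : ℕ, 0 ≤ ∫ t in Set.Ico (0 : ℝ) 1, t ^ n ∂μ := fun n =>
    setIntegral_nonneg measurableSet_Ico fun t ht => pow_nonneg ht.1 n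
  have hpartial := sum_range_rpow_mul_sq_mul_norm_partialSum_sq_le hα0 hα2.le hmoment hmom ha
  have hnonneg : ∀ n : ℕ, 0 ≤ ((n : ℝ) + 1) ^ (1 - β) *
      (∫ t in Set.Ico (0 : ℝ) 1, t ^ n ∂μ) ^ 2 * ‖∑ k ∈ range (n + 1), a k‖ ^ 2 :=
    fun n => by positivity
  have hW : 0 ≤ ∑' n : ℕ, ((n : ℝ) + 1) ^ (1 - α) * ‖a n‖ ^ 2 := tsum_nonneg fun n => by positivity
  refine ⟨summable_of_sum_range_le hnonneg hpartial, ?_⟩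
  calc _ ≤ (C₅ ^ 2 * (2 * (2 + α) / α ^ 2) *
          ∑' n : ℕ, ((n : ℝ) + 1) ^ (1 - α) * ‖a n‖ ^ 2) ^ ((1 : ℝ) / 2) := by
        gcongr
        exact Real.tsum_le_of_sum_range_le hnonneg hpartial
    _ = _ := by
        rw [← Real.sqrt_eq_rpow, ← Real.sqrt_eq_rpow, Real.sqrt_mul' _ hW,
          Real.sqrt_mul' _ (by positivity), Real.sqrt_div' _ (sq_nonneg α), Real.sqrt_sq hC₅.le,
          Real.sqrt_sq hα0.le]

/-- If `0 < α, β < 2` and the moments of `μ` satisfy `μ[n] ≤ C₅ (n+1)^{-1-(α-β)/2}`, then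
`C_μ` is bounded from `D_α` into `D_β` with norm at most `C₅ √(2(2+α))/α`. -/
theorem moment_decay_implies_bounded (α β : ℝ) (hα0 : 0 < α) (hα2 : α < 2)
    (hβ0 : 0 < β) (hβ2 : β < 2)
    (μ : Measure ℝ) [IsFiniteMeasure μ] (hμsupp : μ (Set.Ico (0 : ℝ) 1)ᶜ = 0)
    (C₅ : ℝ) (hC₅ : 0 < C₅)
    (hmom : ∀ n : ℕ,
      (∫ t in Set.Ico (0 : ℝ) 1, t ^ n ∂μ) ≤ C₅ * ((n : ℝ) + 1) ^ (-(1 + (α - β) / 2)))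
    (a : ℕ → ℂ)
    (ha : Summable fun n : ℕ => ((n : ℝ) + 1) ^ (1 - α) * ‖a n‖ ^ 2) :
    Summable (fun n : ℕ => ((n : ℝ) + 1) ^ (1 - β) *
      (∫ t in Set.Ico (0 : ℝ) 1, t ^ n ∂μ) ^ 2 * ‖∑ k ∈ Finset.range (n + 1), a k‖ ^ 2) ∧
    (∑' n : ℕ, ((n : ℝ) + 1) ^ (1 - β) *
        (∫ t in Set.Ico (0 : ℝ) 1, t ^ n ∂μ) ^ 2 *
        ‖∑ k ∈ Finset.range (n + 1), a k‖ ^ 2) ^ ((1 : ℝ) / 2) ≤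
      C₅ * (Real.sqrt (2 * (2 + α)) / α) *
        (∑' n : ℕ, ((n : ℝ) + 1) ^ (1 - α) * ‖a n‖ ^ 2) ^ ((1 : ℝ) / 2) :=
  moment_decay_implies_bounded_general α β hα0 hα2 μ C₅ hC₅ hmom a ha
end
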